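/- Let R be a root system in (ℝ^{n+2}, B) with multiplicity function k, positive subsystem R_+ and γ_k = Σ_{α∈R_+} k(α), all of whose roots have the form α = (α_0, α_1, …, α_n, α_0). Set w := −n/2 − γ_k + 1. Let f : ℝ^n → ℝ be smooth and f̃(X) := (X^0)^w f(X^1/X^0, …, X^n/X^0) on {X^0 > 0}. Let x ∈ ℝ^n be such that for every α ∈ R_+, P_α(x) := α_0(1 − ½Σ_{i=1}^n x_i²) + Σ_{i=1}^n α_i x_i ≠ 0 and c_α(x) := 1 − (2α_0/B(α,α))·P_α(x) > 0. Then the conformal Dunkl–Laplace operator in the local chart is given by (Δ̃_k f̃)(X(x)) = Σ_{i=1}^n (∂²f/∂x_i²)(x) + 2Σ_{α∈R_+} k(α)·[ (α_0·(w·f(x) − Σ_{j=1}^n x_j (∂f/∂x_j)(x)) + Σ_{i=1}^n α_i (∂f/∂x_i)(x))/P_α(x) − (f(x) − c_α(x)^w · f(y^α(x)))/P_α(x)² ], where y^α(x)_i = (x_i − (2α_i/B(α,α))·P_α(x))/c_α(x) for i = 1, …, n. -/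

import Mathlib

open scoped BigOperators
open Real

noncomputable section

/-- The middle index `i+1` in `Fin (n+2)` for `i : Fin n`
(coordinates are `X^0, X^1, …, X^n, X^∞`). -/
def mid (n : ℕ) (i : Fin n) : Fin (n + 2) := i.succ.castSucc

/-- The last index, corresponding to the coordinate `X^∞`. -/
def infIdx (n : ℕ) : Fin (n + 2) := Fin.last (n + 1)

/-- The symmetric bilinear form
`B(X,Y) = X^0 Y^∞ + X^∞ Y^0 + Σ_{i=1}^n X^i Y^i` of signature `(n+1,1)`. -/
def Bform (n : ℕ) (X Y : Fin (n + 2) → ℝ) : ℝ :=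
  X 0 * Y (infIdx n) + X (infIdx n) * Y 0 + ∑ i : Fin n, X (mid n i) * Y (mid n i)

/-- The reflection `R_α X = X − 2 (B(α,X)/B(α,α)) α`. -/
def reflct (n : ℕ) (α X : Fin (n + 2) → ℝ) : Fin (n + 2) → ℝ :=
  X - (2 * Bform n α X / Bform n α α) • α

/-- The `j`-th coordinate vector of the ambient space. -/
def basisVec (n : ℕ) (j : Fin (n + 2)) : Fin (n + 2) → ℝ := Pi.single j 1

/-- The ambient Laplacian `Δ̃ = 2 ∂_{X^0} ∂_{X^∞} + Σ_{i=1}^n ∂²_{X^i}`. -/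
def ambLap (n : ℕ) (f : (Fin (n + 2) → ℝ) → ℝ) (X : Fin (n + 2) → ℝ) : ℝ :=
  2 * fderiv ℝ (fun Y => fderiv ℝ f Y (basisVec n 0)) X (basisVec n (infIdx n))
    + ∑ i : Fin n,
        fderiv ℝ (fun Y => fderiv ℝ f Y (basisVec n (mid n i))) X (basisVec n (mid n i))

/-- The Dunkl–Laplace operator
`(Δ_k f)(X) = (Δ̃f)(X) + 2 Σ_{α∈R_+} k(α) [Df(X)(α)/B(α,X) − (f(X) − f(R_α X))/B(α,X)²]`. -/
def dunklLap (n : ℕ) (Rplus : Finset (Fin (n + 2) → ℝ)) (k : (Fin (n + 2) → ℝ) → ℝ)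
    (f : (Fin (n + 2) → ℝ) → ℝ) (X : Fin (n + 2) → ℝ) : ℝ :=
  ambLap n f X + 2 * ∑ α ∈ Rplus, k α *
    (fderiv ℝ f X α / Bform n α X - (f X - f (reflct n α X)) / (Bform n α X) ^ 2)

/-- The point `X(x) = (1, x_1, …, x_n, −½ Σ x_i²)` of the null cone. -/
def Xmap (n : ℕ) (x : Fin n → ℝ) : Fin (n + 2) → ℝ :=
  Fin.cons 1 (Fin.snoc (fun i => x i) (-(1 / 2) * ∑ i : Fin n, (x i) ^ 2))

/-- The ρ-independent `w`-homogeneous extension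
`f̃(X) = (X^0)^w f(X^1/X^0, …, X^n/X^0)`. -/
def ftil (n : ℕ) (w : ℝ) (f : (Fin n → ℝ) → ℝ) (X : Fin (n + 2) → ℝ) : ℝ :=
  (X 0) ^ w * f (fun i => X (mid n i) / X 0)

/-- A root system in `(ℝ^{n+2}, B)`: a finite set of non-null vectors with
`R ∩ ℝα = {α, −α}` and `R_α(R) = R` for all `α ∈ R`. -/
def IsRootSystem (n : ℕ) (R : Finset (Fin (n + 2) → ℝ)) : Prop :=
  (∀ α ∈ R, Bform n α α ≠ 0) ∧
  (∀ α ∈ R, -α ∈ R) ∧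
  (∀ α ∈ R, ∀ β ∈ R, (∃ c : ℝ, β = c • α) → β = α ∨ β = -α) ∧
  (∀ α ∈ R, ∀ β ∈ R, reflct n α β ∈ R)

/-- A multiplicity function: `k(R_β α) = k(α)` for all roots `α, β`. -/
def IsMultiplicity (n : ℕ) (R : Finset (Fin (n + 2) → ℝ))
    (k : (Fin (n + 2) → ℝ) → ℝ) : Prop :=
  ∀ α ∈ R, ∀ β ∈ R, k (reflct n β α) = k α

/-- A positive subsystem: `R` is the disjoint union of `R_+` and `−R_+`. -/
def IsPositive (n : ℕ) (R Rplus : Finset (Fin (n + 2) → ℝ)) : Prop :=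
  Rplus ⊆ R ∧ (∀ α ∈ R, α ∈ Rplus ∨ -α ∈ Rplus) ∧ (∀ α ∈ Rplus, -α ∉ Rplus)

/-! ### Auxiliary machinery -/

section Aux

variable {n : ℕ}

lemma mid_ne_zero (i : Fin n) : mid n i ≠ 0 := by
  simp [mid, Fin.ext_iff]

lemma mid_ne_inf (i : Fin n) : mid n i ≠ infIdx n := by
  simp only [mid, infIdx, Ne, Fin.ext_iff, Fin.coe_castSucc, Fin.val_succ, Fin.val_last]
  have := i.isLt; omega

lemma infIdx_ne_zero : infIdx n ≠ 0 := by simp [infIdx, Fin.ext_iff]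

lemma mid_inj {i j : Fin n} (h : mid n i = mid n j) : i = j := by
  simpa [mid, Fin.ext_iff] using h

lemma Xmap_zero (x : Fin n → ℝ) : Xmap n x 0 = 1 := rfl

lemma Xmap_mid (x : Fin n → ℝ) (i : Fin n) : Xmap n x (mid n i) = x i := by
  rw [Xmap, mid, ← Fin.succ_castSucc, Fin.cons_succ, Fin.snoc_castSucc]

lemma Xmap_inf (x : Fin n → ℝ) :
    Xmap n x (infIdx n) = -(1 / 2) * ∑ i : Fin n, (x i) ^ 2 := by
  rw [Xmap, infIdx, ← Fin.succ_last, Fin.cons_succ, Fin.snoc_last]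

@[simp] lemma basisVec_zero_zero : basisVec n 0 0 = 1 := Pi.single_eq_same ..
@[simp] lemma basisVec_zero_mid (j : Fin n) : basisVec n 0 (mid n j) = 0 :=
  Pi.single_eq_of_ne (mid_ne_zero j) _
@[simp] lemma basisVec_inf_zero : basisVec n (infIdx n) 0 = 0 :=
  Pi.single_eq_of_ne (Ne.symm infIdx_ne_zero) _
@[simp] lemma basisVec_inf_mid (j : Fin n) : basisVec n (infIdx n) (mid n j) = 0 :=
  Pi.single_eq_of_ne (mid_ne_inf j) _
@[simp] lemma basisVec_mid_zero (i : Fin n) : basisVec n (mid n i) 0 = 0 :=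
  Pi.single_eq_of_ne (Ne.symm (mid_ne_zero i)) _
@[simp] lemma basisVec_mid_mid (i j : Fin n) :
    basisVec n (mid n i) (mid n j) = (Pi.single i 1 : Fin n → ℝ) j := by
  by_cases h : j = i
  · subst h; rw [basisVec, Pi.single_eq_same, Pi.single_eq_same]
  · rw [basisVec, Pi.single_eq_of_ne (fun hh => h (mid_inj hh)), Pi.single_eq_of_ne h]

lemma clm_sum (L : (Fin n → ℝ) →L[ℝ] ℝ) (v : Fin n → ℝ) :
    L v = ∑ j, v j * L (Pi.single j 1 : Fin n → ℝ) := by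
  conv_lhs => rw [← Finset.univ_sum_single v]
  rw [map_sum]
  refine Finset.sum_congr rfl fun j _ => ?_
  have h : (Pi.single j (v j) : Fin n → ℝ) = v j • (Pi.single j 1 : Fin n → ℝ) := by
    funext l
    by_cases hl : l = j
    · subst hl; simp
    · simp [Pi.single_eq_of_ne hl]
  rw [h, map_smul, smul_eq_mul]

/-- The local chart `u(X) = (X^1/X^0, …, X^n/X^0)`. -/
def uu (n : ℕ) (X : Fin (n + 2) → ℝ) : Fin n → ℝ := fun i => X (mid n i) / X 0

def prj (n : ℕ) (j : Fin (n + 2)) : (Fin (n + 2) → ℝ) →L[ℝ] ℝ :=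
  ContinuousLinearMap.proj j

/-- Derivative of the local chart. -/
def Uclm (n : ℕ) (Y : Fin (n + 2) → ℝ) : (Fin (n + 2) → ℝ) →L[ℝ] (Fin n → ℝ) :=
  ContinuousLinearMap.pi fun j =>
    Y (mid n j) • ((-(Y 0 ^ 2)⁻¹) • prj n 0) + (Y 0)⁻¹ • prj n (mid n j)

/-- Derivative of `ftil` at points with positive zeroth coordinate. -/
def Dclm (n : ℕ) (w : ℝ) (f : (Fin n → ℝ) → ℝ) (Y : Fin (n + 2) → ℝ) :
    (Fin (n + 2) → ℝ) →L[ℝ] ℝ :=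
  (Y 0) ^ w • ((fderiv ℝ f (uu n Y)).comp (Uclm n Y)) +
    f (uu n Y) • ((w * (Y 0) ^ (w - 1)) • prj n 0)

variable {w : ℝ} {f : (Fin n → ℝ) → ℝ}

lemma hasFDerivAt_ftil (hf : ContDiff ℝ (⊤ : ℕ∞) f) {Y : Fin (n + 2) → ℝ} (hY : 0 < Y 0) :
    HasFDerivAt (ftil n w f) (Dclm n w f Y) Y := by
  have h0 : HasFDerivAt (fun Z : Fin (n + 2) → ℝ => Z 0) (prj n 0) Y :=
    hasFDerivAt_apply (𝕜 := ℝ) 0 Y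
  have hinv : HasFDerivAt (fun Z : Fin (n + 2) → ℝ => (Z 0)⁻¹)
      ((-(Y 0 ^ 2)⁻¹) • prj n 0) Y :=
    (hasDerivAt_inv hY.ne').comp_hasFDerivAt Y h0
  have huu : HasFDerivAt (uu n) (Uclm n Y) Y := by
    apply hasFDerivAt_pi.2
    intro j
    have h := (hasFDerivAt_apply (𝕜 := ℝ) (mid n j) Y).mul hinv
    have heq : (fun Z : Fin (n + 2) → ℝ => Z (mid n j) * (Z 0)⁻¹)
        = fun Z : Fin (n + 2) → ℝ => Z (mid n j) / Z 0 := by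
      funext Z; rw [div_eq_mul_inv]
    replace h : HasFDerivAt (fun Z : Fin (n + 2) → ℝ => Z (mid n j) * (Z 0)⁻¹) _ Y := h; rw [heq] at h
    exact h
  have hcf : HasFDerivAt f (fderiv ℝ f (uu n Y)) (uu n Y) :=
    (hf.differentiable (by simp) (uu n Y)).hasFDerivAt
  have hcomp := hcf.comp Y huu
  have hpow : HasFDerivAt (fun Z : Fin (n + 2) → ℝ => (Z 0) ^ w)
      ((w * (Y 0) ^ (w - 1)) • prj n 0) Y :=
    (Real.hasDerivAt_rpow_const (Or.inl hY.ne')).comp_hasFDerivAt (f := fun Z : Fin (n + 2) → ℝ => Z 0) Y h0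
  exact hpow.mul hcomp

lemma Uclm_apply (Y v : Fin (n + 2) → ℝ) :
    Uclm n Y v = fun j => Y (mid n j) * (-(Y 0 ^ 2)⁻¹ * v 0) + (Y 0)⁻¹ * v (mid n j) := by
  funext j
  simp [Uclm, prj, mul_comm, mul_assoc]

lemma Dclm_apply (Y v : Fin (n + 2) → ℝ) :
    Dclm n w f Y v
      = (Y 0) ^ w * fderiv ℝ f (uu n Y)
          (fun j => Y (mid n j) * (-(Y 0 ^ 2)⁻¹ * v 0) + (Y 0)⁻¹ * v (mid n j))
        + f (uu n Y) * (w * (Y 0) ^ (w - 1) * v 0) := by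
  rw [Dclm]
  simp only [ContinuousLinearMap.add_apply, ContinuousLinearMap.coe_smul',
    Pi.smul_apply, ContinuousLinearMap.coe_comp', Function.comp_apply, smul_eq_mul]
  rw [Uclm_apply]
  simp [prj, mul_assoc]

lemma DclmF_diff (hf : ContDiff ℝ (⊤ : ℕ∞) f) {X : Fin (n + 2) → ℝ} (hX0 : X 0 ≠ 0)
    (v : Fin (n + 2) → ℝ) :
    DifferentiableAt ℝ (fun Y => Dclm n w f Y v) X := by
  have h0 : DifferentiableAt ℝ (fun Y : Fin (n + 2) → ℝ => Y 0) X :=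
    (hasFDerivAt_apply (𝕜 := ℝ) 0 X).differentiableAt
  have hm : ∀ j : Fin n, DifferentiableAt ℝ (fun Y : Fin (n + 2) → ℝ => Y (mid n j)) X :=
    fun j => (hasFDerivAt_apply (𝕜 := ℝ) (mid n j) X).differentiableAt
  have huu : DifferentiableAt ℝ (uu n) X := by
    apply differentiableAt_pi.2
    intro j
    have : DifferentiableAt ℝ (fun Y : Fin (n + 2) → ℝ => Y (mid n j) * (Y 0)⁻¹) X :=
      (hm j).mul (h0.inv hX0)
    simpa [uu, div_eq_mul_inv] using this
  have hfd : DifferentiableAt ℝ (fun Y => fderiv ℝ f (uu n Y)) X :=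
    DifferentiableAt.comp X
      (((hf.fderiv_right (m := 1) (by exact WithTop.coe_le_coe.2 le_top)).differentiable one_ne_zero) (uu n X)) huu
  have hvec : DifferentiableAt ℝ
      (fun Y : Fin (n + 2) → ℝ =>
        (fun j => Y (mid n j) * (-(Y 0 ^ 2)⁻¹ * v 0) + (Y 0)⁻¹ * v (mid n j))) X := by
    apply differentiableAt_pi.2
    intro j
    exact ((hm j).mul ((((h0.pow 2).inv (pow_ne_zero 2 hX0)).neg).mul
      (differentiableAt_const _))).add ((h0.inv hX0).mul (differentiableAt_const _))
  have happ : DifferentiableAt ℝ (fun Y =>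
      fderiv ℝ f (uu n Y)
        (fun j => Y (mid n j) * (-(Y 0 ^ 2)⁻¹ * v 0) + (Y 0)⁻¹ * v (mid n j))) X :=
    hfd.clm_apply hvec
  have hfc : DifferentiableAt ℝ (fun Y => f (uu n Y)) X :=
    DifferentiableAt.comp X ((hf.differentiable (by simp)) (uu n X)) huu
  have h1 : DifferentiableAt ℝ (fun Y : Fin (n + 2) → ℝ => (Y 0) ^ w) X :=
    h0.rpow_const (Or.inl hX0)
  have h2 : DifferentiableAt ℝ (fun Y : Fin (n + 2) → ℝ => (Y 0) ^ (w - 1)) X :=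
    h0.rpow_const (Or.inl hX0)
  simp only [Dclm_apply]
  exact (h1.mul happ).add (hfc.mul (((differentiableAt_const w).mul h2).mul
    (differentiableAt_const (v 0))))

lemma key2 (hf : ContDiff ℝ (⊤ : ℕ∞) f) {X : Fin (n + 2) → ℝ} (hX : 0 < X 0)
    (v v' : Fin (n + 2) → ℝ) {V : ℝ}
    (h2 : HasDerivAt (fun t : ℝ => Dclm n w f (X + t • v') v) V 0) :
    fderiv ℝ (fun Y => fderiv ℝ (ftil n w f) Y v) X v' = V := by
  have hFd : DifferentiableAt ℝ (fun Y => Dclm n w f Y v) X := DclmF_diff hf hX.ne' v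
  have hS : IsOpen {Y : Fin (n + 2) → ℝ | 0 < Y 0} :=
    isOpen_lt continuous_const (continuous_apply 0)
  have hev : (fun Y => fderiv ℝ (ftil n w f) Y v) =ᶠ[nhds X]
      (fun Y => Dclm n w f Y v) := by
    filter_upwards [hS.mem_nhds hX] with Y hY
    rw [(hasFDerivAt_ftil (w := w) hf hY).fderiv]
  rw [hev.fderiv_eq]
  have hline : HasDerivAt (fun t : ℝ => X + t • v') v' 0 := by
    simpa using ((hasDerivAt_id (0 : ℝ)).smul_const v').const_add X
  have hF : HasFDerivAt (fun Y => Dclm n w f Y v)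
      (fderiv ℝ (fun Y => Dclm n w f Y v) X) ((fun t : ℝ => X + t • v') 0) := by
    simpa using hFd.hasFDerivAt
  have h3 : HasDerivAt (fun t : ℝ => Dclm n w f (X + t • v') v)
      (fderiv ℝ (fun Y => Dclm n w f Y v) X v') 0 := hF.comp_hasDerivAt (f := fun t : ℝ => X + t • v') 0 hline
  exact h3.unique h2

end Aux

/-- the explicit form of the conformal Dunkl–Laplace operator in the
local chart: for a root system all of whose roots have the form
`α = (α_0, α_1, …, α_n, α_0)`, the critical weight `w = −n/2 − γ_k + 1`,
`P_α(x) = α_0(1 − ½Σ x_i²) + Σ α_i x_i ≠ 0` and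
`c_α(x) = 1 − (2α_0/B(α,α)) P_α(x) > 0` for all `α ∈ R_+`, one has
`(Δ̃_k f̃)(X(x)) = Σ ∂²f/∂x_i²(x) + 2 Σ_{α∈R_+} k(α) [ (α_0(w f(x) − Σ x_j ∂_j f(x))
  + Σ α_i ∂_i f(x))/P_α(x) − (f(x) − c_α(x)^w f(y^α(x)))/P_α(x)² ]` with
`y^α(x)_i = (x_i − (2α_i/B(α,α)) P_α(x))/c_α(x)`. -/
theorem stmt16 (n : ℕ) (hn : 1 ≤ n)
    (R Rplus : Finset (Fin (n + 2) → ℝ)) (k : (Fin (n + 2) → ℝ) → ℝ)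
    (hR : IsRootSystem n R) (hk : IsMultiplicity n R k) (hP : IsPositive n R Rplus)
    (hform : ∀ α ∈ R, α (infIdx n) = α 0)
    (w : ℝ) (hw : w = -(n : ℝ) / 2 - (∑ α ∈ Rplus, k α) + 1)
    (f : (Fin n → ℝ) → ℝ) (hf : ContDiff ℝ (⊤ : ℕ∞) f)
    (x : Fin n → ℝ)
    (P : (Fin (n + 2) → ℝ) → ℝ)
    (hPdef : ∀ α : Fin (n + 2) → ℝ, P α
      = α 0 * (1 - (1 / 2) * ∑ i : Fin n, (x i) ^ 2) + ∑ i : Fin n, α (mid n i) * x i)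
    (c : (Fin (n + 2) → ℝ) → ℝ)
    (hcdef : ∀ α : Fin (n + 2) → ℝ, c α = 1 - (2 * α 0 / Bform n α α) * P α)
    (hPne : ∀ α ∈ Rplus, P α ≠ 0)
    (hcpos : ∀ α ∈ Rplus, 0 < c α) :
    dunklLap n Rplus k (ftil n w f) (Xmap n x)
      = (∑ i : Fin n, fderiv ℝ (fun y => fderiv ℝ f y (Pi.single i 1)) x (Pi.single i 1))
        + 2 * ∑ α ∈ Rplus, k α *
            ((α 0 * (w * f x - ∑ j : Fin n, x j * fderiv ℝ f x (Pi.single j 1))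
                + ∑ i : Fin n, α (mid n i) * fderiv ℝ f x (Pi.single i 1)) / P α
              - (f x - (c α) ^ w *
                  f (fun i => (x i - (2 * α (mid n i) / Bform n α α) * P α) / c α))
                / (P α) ^ 2) := by
  have hXpos : (0 : ℝ) < Xmap n x 0 := by rw [Xmap_zero]; norm_num
  have huux : uu n (Xmap n x) = x := by
    funext j; simp [uu, Xmap_mid, Xmap_zero]
  -- cross term of the ambient Laplacian vanishes
  have hcross : fderiv ℝ (fun Y => fderiv ℝ (ftil n w f) Y (basisVec n 0)) (Xmap n x)
      (basisVec n (infIdx n)) = 0 := by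
    have hconst : (fun t : ℝ => Dclm n w f (Xmap n x + t • basisVec n (infIdx n))
        (basisVec n 0)) = fun _ => Dclm n w f (Xmap n x) (basisVec n 0) := by
      funext t
      have h1 : (Xmap n x + t • basisVec n (infIdx n)) 0 = Xmap n x 0 := by
        simp
      have h2 : uu n (Xmap n x + t • basisVec n (infIdx n)) = uu n (Xmap n x) := by
        funext j; simp [uu]
      simp only [Dclm_apply, h1, h2, Pi.add_apply, Pi.smul_apply, smul_eq_mul,
        basisVec_inf_zero, basisVec_inf_mid, mul_zero, add_zero]
    exact key2 hf hXpos _ _ (hconst ▸ hasDerivAt_const (0 : ℝ) _)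
  -- diagonal terms
  have hdiag : ∀ i : Fin n,
      fderiv ℝ (fun Y => fderiv ℝ (ftil n w f) Y (basisVec n (mid n i))) (Xmap n x)
        (basisVec n (mid n i))
      = fderiv ℝ (fun y => fderiv ℝ f y (Pi.single i 1)) x (Pi.single i 1) := by
    intro i
    have hfun : (fun t : ℝ => Dclm n w f (Xmap n x + t • basisVec n (mid n i))
        (basisVec n (mid n i)))
        = fun t => fderiv ℝ f (x + t • (Pi.single i 1 : Fin n → ℝ))
            (Pi.single i 1 : Fin n → ℝ) := by
      funext t
      rw [Dclm_apply]
      have hco : (Xmap n x + t • basisVec n (mid n i)) 0 = 1 := by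
        simp [Xmap_zero]
      have huut : uu n (Xmap n x + t • basisVec n (mid n i))
          = x + t • (Pi.single i 1 : Fin n → ℝ) := by
        funext j
        simp [uu, Xmap_zero, Xmap_mid]
      rw [huut, hco]
      have hvec : (fun j => (Xmap n x + t • basisVec n (mid n i)) (mid n j) *
            (-((1 : ℝ) ^ 2)⁻¹ * basisVec n (mid n i) 0)
            + (1 : ℝ)⁻¹ * basisVec n (mid n i) (mid n j))
          = (Pi.single i 1 : Fin n → ℝ) := by
        funext j
        simp
      rw [hvec]
      simp
    have hG : DifferentiableAt ℝ
        (fun y => fderiv ℝ f y (Pi.single i 1 : Fin n → ℝ)) x :=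
      (((hf.fderiv_right (m := 1) (by exact WithTop.coe_le_coe.2 le_top)).differentiable one_ne_zero) x).clm_apply
        (differentiableAt_const _)
    have hline' : HasDerivAt (fun t : ℝ => x + t • (Pi.single i 1 : Fin n → ℝ))
        (Pi.single i 1 : Fin n → ℝ) 0 := by
      simpa using ((hasDerivAt_id (0 : ℝ)).smul_const (Pi.single i 1 : Fin n → ℝ)).const_add x
    have hGF : HasFDerivAt (fun y => fderiv ℝ f y (Pi.single i 1 : Fin n → ℝ))
        (fderiv ℝ (fun y => fderiv ℝ f y (Pi.single i 1 : Fin n → ℝ)) x)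
        ((fun t : ℝ => x + t • (Pi.single i 1 : Fin n → ℝ)) 0) := by
      simpa using hG.hasFDerivAt
    exact key2 hf hXpos _ _ (hfun ▸ hGF.comp_hasDerivAt (f := fun t : ℝ => x + t • (Pi.single i 1 : Fin n → ℝ)) 0 hline')
  have hamb : ambLap n (ftil n w f) (Xmap n x)
      = ∑ i : Fin n, fderiv ℝ (fun y => fderiv ℝ f y (Pi.single i 1)) x (Pi.single i 1) := by
    rw [ambLap, hcross, mul_zero, zero_add]
    exact Finset.sum_congr rfl fun i _ => hdiag i
  have hterm : ∀ α ∈ Rplus,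
      k α * (fderiv ℝ (ftil n w f) (Xmap n x) α / Bform n α (Xmap n x)
          - (ftil n w f (Xmap n x) - ftil n w f (reflct n α (Xmap n x)))
            / (Bform n α (Xmap n x)) ^ 2)
      = k α *
          ((α 0 * (w * f x - ∑ j : Fin n, x j * fderiv ℝ f x (Pi.single j 1))
              + ∑ i : Fin n, α (mid n i) * fderiv ℝ f x (Pi.single i 1)) / P α
            - (f x - (c α) ^ w *
                f (fun i => (x i - (2 * α (mid n i) / Bform n α α) * P α) / c α))
              / (P α) ^ 2) := by
    intro α hα
    have hainf : α (infIdx n) = α 0 := hform α (hP.1 hα)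
    have hBX : Bform n α (Xmap n x) = P α := by
      rw [Bform, Xmap_zero, Xmap_inf, hainf, hPdef]
      have hs : ∑ i : Fin n, α (mid n i) * Xmap n x (mid n i)
          = ∑ i : Fin n, α (mid n i) * x i :=
        Finset.sum_congr rfl fun i _ => by rw [Xmap_mid]
      rw [hs]; ring
    have hfX : ftil n w f (Xmap n x) = f x := by
      rw [ftil, Xmap_zero, Real.one_rpow, one_mul]
      exact congrArg f (funext fun i => by rw [Xmap_mid, div_one])
    have hr0 : reflct n α (Xmap n x) 0 = c α := by
      rw [reflct]
      simp only [Pi.sub_apply, Pi.smul_apply, smul_eq_mul, Xmap_zero, hBX, hcdef]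
      ring
    have hrm : ∀ i : Fin n, reflct n α (Xmap n x) (mid n i)
        = x i - 2 * α (mid n i) / Bform n α α * P α := by
      intro i
      rw [reflct]
      simp only [Pi.sub_apply, Pi.smul_apply, smul_eq_mul, Xmap_mid, hBX]
      ring
    have hfR : ftil n w f (reflct n α (Xmap n x))
        = (c α) ^ w * f (fun i => (x i - (2 * α (mid n i) / Bform n α α) * P α) / c α) := by
      rw [ftil, hr0]
      congr 1
      exact congrArg f (funext fun i => by rw [hrm i])
    have hDα : fderiv ℝ (ftil n w f) (Xmap n x) α
        = α 0 * (w * f x - ∑ j : Fin n, x j * fderiv ℝ f x (Pi.single j 1))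
          + ∑ i : Fin n, α (mid n i) * fderiv ℝ f x (Pi.single i 1) := by
      rw [(hasFDerivAt_ftil (w := w) hf hXpos).fderiv, Dclm_apply, huux]
      have hvec : (fun j => Xmap n x (mid n j) * (-(Xmap n x 0 ^ 2)⁻¹ * α 0)
            + (Xmap n x 0)⁻¹ * α (mid n j))
          = fun j => x j * (-(α 0)) + α (mid n j) := by
        funext j
        rw [Xmap_zero, Xmap_mid]
        norm_num
      rw [hvec, clm_sum, Xmap_zero]
      simp only [Real.one_rpow]
      have hsplit : ∑ j : Fin n, (x j * (-(α 0)) + α (mid n j)) * fderiv ℝ f x (Pi.single j 1)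
          = ∑ j : Fin n, α (mid n j) * fderiv ℝ f x (Pi.single j 1)
            - α 0 * ∑ j : Fin n, x j * fderiv ℝ f x (Pi.single j 1) := by
        rw [Finset.mul_sum, ← Finset.sum_sub_distrib]
        exact Finset.sum_congr rfl fun j _ => by ring
      rw [hsplit]
      ring
    rw [hBX, hfX, hfR, hDα]
  rw [dunklLap, hamb, Finset.sum_congr rfl hterm]
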